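/- Let 𝒯 be a tree ensemble on ℝ^p and (z^L,z^R) a region. Then Φ(z^L,z^R) = 0 if all cells z enclosed in the region have the same weighted majority class F_𝒯(z), and otherwise Φ(z^L,z^R) = min over features j ∈ {1,…,p} and levels l with z^L_j ≤ l < z^R_j of 1 + max{Φ(z^L,z^R_{jl}), Φ(z^L_{jl},z^R)}. -/

import Mathlib

/-- A decision tree on `ℝ^p`: either a leaf labeled with a class `c : ℕ`,
or an internal node splitting on feature `j` with threshold `t`. -/
inductive DTree (p : ℕ) : Type where
  | leaf (c : ℕ) : DTree p
  | node (j : Fin p) (t : ℝ) (L R : DTree p) : DTree p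

namespace DTree

/-- Evaluation of a decision tree at a point `x : ℝ^p`. -/
noncomputable def eval {p : ℕ} : DTree p → (Fin p → ℝ) → ℕ
  | leaf c, _ => c
  | node j t L R, x => if x j ≤ t then L.eval x else R.eval x

/-- Depth `Φ(T)` of a decision tree. -/
def depth {p : ℕ} : DTree p → ℕ
  | leaf _ => 0
  | node _ _ L R => 1 + max L.depth R.depth

/-- Number of leaves `L(T)` of a decision tree. -/
def leaves {p : ℕ} : DTree p → ℕ
  | leaf _ => 1
  | node _ _ L R => L.leaves + R.leaves

/-- The set of splits `(j, t)` occurring at internal nodes of a tree. -/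
def splits {p : ℕ} : DTree p → Set (Fin p × ℝ)
  | leaf _ => ∅
  | node j t L R => insert (j, t) (L.splits ∪ R.splits)

end DTree

/-- A tree ensemble: a finite nonempty family of decision trees with positive weights. -/
structure Ensemble (p : ℕ) : Type where
  m : ℕ
  m_pos : 0 < m
  tree : Fin m → DTree p
  weight : Fin m → ℝ
  weight_pos : ∀ i, 0 < weight i

namespace Ensemble

/-- Total weight of the trees voting for class `c` at point `x`. -/
noncomputable def score {p : ℕ} (E : Ensemble p) (x : Fin p → ℝ) (c : ℕ) : ℝ :=
  ∑ i ∈ Finset.univ.filter (fun i => (E.tree i).eval x = c), E.weight i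

/-- The decision function of the ensemble: the smallest class maximizing the weighted vote. -/
noncomputable def F {p : ℕ} (E : Ensemble p) (x : Fin p → ℝ) : ℕ :=
  sInf {c : ℕ | ∀ c' : ℕ, E.score x c' ≤ E.score x c}

/-- The set `H j` of thresholds appearing in splits on feature `j` in trees of the ensemble. -/
def H {p : ℕ} (E : Ensemble p) (j : Fin p) : Set ℝ :=
  {t : ℝ | ∃ i, (j, t) ∈ (E.tree i).splits}

end Ensemble

/-- `T` is faithful to the ensemble `E` on the set `S`. -/
def Faithful {p : ℕ} (T : DTree p) (E : Ensemble p) (S : Set (Fin p → ℝ)) : Prop :=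
  ∀ x ∈ S, T.eval x = E.F x
/-- A cell: for each feature `j`, an index in `{0, …, n j}` (0-indexed version of `{1, …, |H_j|+1}`). -/
abbrev Cell {p : ℕ} (n : Fin p → ℕ) : Type := ∀ j, Fin (n j + 1)

/-- The open box `B(z)` associated with a cell `z`, given for each feature `j` the
increasing enumeration `h j : Fin (n j) → ℝ` of the thresholds: `x j` lies strictly above
every threshold of index `< z j` and strictly below every threshold of index `≥ z j`. -/
def Box {p : ℕ} (n : Fin p → ℕ) (h : ∀ j, Fin (n j) → ℝ) (z : Cell n) : Set (Fin p → ℝ) :=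
  {x | ∀ j, (∀ k : Fin (n j), (k : ℕ) < (z j : ℕ) → h j k < x j) ∧
            (∀ k : Fin (n j), (z j : ℕ) ≤ (k : ℕ) → x j < h j k)}

/-- The cell `z` is enclosed in the region `(zL, zR)`. -/
def Encl {p : ℕ} {n : Fin p → ℕ} (zL zR z : Cell n) : Prop :=
  ∀ j, (zL j : ℕ) ≤ (z j : ℕ) ∧ (z j : ℕ) ≤ (zR j : ℕ)

/-- The subset of `ℝ^p` covered by the region `(zL, zR)`: the union of the boxes of the
cells it encloses. -/
def RegionSet {p : ℕ} (n : Fin p → ℕ) (h : ∀ j, Fin (n j) → ℝ) (zL zR : Cell n) :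
    Set (Fin p → ℝ) :=
  ⋃ z ∈ {z : Cell n | Encl zL zR z}, Box n h z

/-- `Φ(zL, zR)`: the minimum depth of a decision tree faithful to `E` on the region `(zL, zR)`. -/
noncomputable def Phi {p : ℕ} (E : Ensemble p) (n : Fin p → ℕ) (h : ∀ j, Fin (n j) → ℝ)
    (zL zR : Cell n) : ℕ :=
  sInf {d : ℕ | ∃ T : DTree p, Faithful T E (RegionSet n h zL zR) ∧ T.depth = d}

/-- `Λ(zL, zR)`: the minimum number of leaves of a decision tree faithful to `E` on `(zL, zR)`. -/
noncomputable def Lam {p : ℕ} (E : Ensemble p) (n : Fin p → ℕ) (h : ∀ j, Fin (n j) → ℝ)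
    (zL zR : Cell n) : ℕ :=
  sInf {d : ℕ | ∃ T : DTree p, Faithful T E (RegionSet n h zL zR) ∧ T.leaves = d}

/-- `z^R_{jl}`: replace the `j`-th coordinate of `zR` by `l`. -/
def splitR {p : ℕ} {n : Fin p → ℕ} (zR : Cell n) (j : Fin p) (l : Fin (n j)) : Cell n :=
  Function.update zR j l.castSucc

/-- `z^L_{jl}`: replace the `j`-th coordinate of `zL` by `l + 1`. -/
def splitL {p : ℕ} {n : Fin p → ℕ} (zL : Cell n) (j : Fin p) (l : Fin (n j)) : Cell n :=
  Function.update zL j l.succ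

/-- The cells `z` and `z'` have the same (weighted majority) class under `E`. -/
def SameClass {p : ℕ} (E : Ensemble p) (n : Fin p → ℕ) (h : ∀ j, Fin (n j) → ℝ)
    (z z' : Cell n) : Prop :=
  ∀ x ∈ Box n h z, ∀ y ∈ Box n h z', E.F x = E.F y

open Classical in
/-- The indicator `𝟙_{jl}(z^L, z^R)`. -/
noncomputable def ind {p : ℕ} (E : Ensemble p) (n : Fin p → ℕ) (h : ∀ j, Fin (n j) → ℝ)
    (zL zR : Cell n) (j : Fin p) (l : Fin (n j)) : ℕ :=
  if Phi E n h zL (splitR zR j l) = 0 ∧ Phi E n h (splitL zL j l) zR = 0 ∧ SameClass E n h zL zR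
  then 0 else 1

/-! Splitting at the threshold `h j l` glues optimal trees for the two halves of the region, so
`Φ` is at most every candidate value. Conversely, let an optimal tree have root split `(j, t)` and
children `L`, `R`. The threshold `t` may cut a cell along `j`, but each point of that cell can be
moved along `j` to the side of `t` to which its half is assigned, without changing its class; the
trees computing `L` and `R` after this move are obtained by pruning, so they are no deeper. Either
`t` then separates the region at some level `l` into two subregions solved within the depths of
`L` and `R`, or after the move the whole region goes to one child and the root can be dropped,
which is handled by induction on the depth. -/

open Function Topology

namespace DTree

variable {p : ℕ}

noncomputable def clampMin (j : Fin p) (t : ℝ) : DTree p → DTree p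
  | leaf c => leaf c
  | node j' s L R =>
      if j' = j ∧ t ≤ s then L.clampMin j t else node j' s (L.clampMin j t) (R.clampMin j t)

noncomputable def clampMax (j : Fin p) (v : ℝ) : DTree p → DTree p
  | leaf c => leaf c
  | node j' s L R =>
      if j' = j ∧ s < v then R.clampMax j v else node j' s (L.clampMax j v) (R.clampMax j v)

theorem depth_clampMin_le (j : Fin p) (t : ℝ) (T : DTree p) :
    (T.clampMin j t).depth ≤ T.depth := by
  induction T with
  | leaf c => rfl
  | node j' s L R ihL ihR =>
    unfold clampMin
    split_ifs <;> simp only [depth] <;> omega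

theorem depth_clampMax_le (j : Fin p) (v : ℝ) (T : DTree p) :
    (T.clampMax j v).depth ≤ T.depth := by
  induction T with
  | leaf c => rfl
  | node j' s L R ihL ihR =>
    unfold clampMax
    split_ifs <;> simp only [depth] <;> omega

theorem eval_clampMin (j : Fin p) (t : ℝ) (T : DTree p) (x : Fin p → ℝ) :
    (T.clampMin j t).eval x = T.eval (update x j (min (x j) t)) := by
  induction T with
  | leaf c => rfl
  | node j' s L R ihL ihR =>
    unfold clampMin
    split_ifs with hc
    · obtain ⟨rfl, hts⟩ := hc
      rw [ihL, eval, update_self, if_pos ((min_le_right _ _).trans hts)]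
    · have hside : x j' ≤ s ↔ update x j (min (x j) t) j' ≤ s := by
        rcases eq_or_ne j' j with rfl | hj
        · have hst : ¬ t ≤ s := fun hts => hc ⟨rfl, hts⟩
          simp [hst]
        · rw [update_of_ne hj]
      simp only [eval, hside, ihL, ihR]

theorem eval_clampMax (j : Fin p) (v : ℝ) (T : DTree p) (x : Fin p → ℝ) :
    (T.clampMax j v).eval x = T.eval (update x j (max (x j) v)) := by
  induction T with
  | leaf c => rfl
  | node j' s L R ihL ihR =>
    unfold clampMax
    split_ifs with hc
    · obtain ⟨rfl, hsv⟩ := hc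
      rw [ihR, eval, update_self, if_neg (hsv.trans_le (le_max_right _ _)).not_ge]
    · have hside : x j' ≤ s ↔ update x j (max (x j) v) j' ≤ s := by
        rcases eq_or_ne j' j with rfl | hj
        · have hvs : v ≤ s := not_lt.1 fun hsv => hc ⟨rfl, hsv⟩
          simp [hvs]
        · rw [update_of_ne hj]
      simp only [eval, hside, ihL, ihR]

end DTree

section Cells

variable {p : ℕ} {n : Fin p → ℕ} {h : ∀ j, Fin (n j) → ℝ}

theorem le_iff_le_of_mem_box {z : Cell n} {x y : Fin p → ℝ} (hx : x ∈ Box n h z)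
    (hy : y ∈ Box n h z) {j : Fin p} (k : Fin (n j)) : x j ≤ h j k ↔ y j ≤ h j k := by
  rcases lt_or_ge (k : ℕ) (z j) with hk | hk
  · exact iff_of_false ((hx j).1 k hk).not_ge ((hy j).1 k hk).not_ge
  · exact iff_of_true ((hx j).2 k hk).le ((hy j).2 k hk).le

theorem DTree.eval_eq_of_mem_box {T : DTree p}
    (hT : ∀ js ∈ T.splits, js.2 ∈ Set.range (h js.1)) {z : Cell n} {x y : Fin p → ℝ}
    (hx : x ∈ Box n h z) (hy : y ∈ Box n h z) : T.eval x = T.eval y := by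
  induction T with
  | leaf c => rfl
  | node j s L R ihL ihR =>
    obtain ⟨k, rfl⟩ : s ∈ Set.range (h j) := hT (j, s) (Set.mem_insert _ _)
    simp only [eval, le_iff_le_of_mem_box hx hy k,
      ihL fun js hjs => hT js (Set.mem_insert_of_mem _ (Or.inl hjs)),
      ihR fun js hjs => hT js (Set.mem_insert_of_mem _ (Or.inr hjs))]

theorem Ensemble.F_eq_of_mem_box {E : Ensemble p} (hcov : ∀ j, E.H j = Set.range (h j))
    {z : Cell n} {x y : Fin p → ℝ} (hx : x ∈ Box n h z) (hy : y ∈ Box n h z) :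
    E.F x = E.F y := by
  have heval (i : Fin E.m) : (E.tree i).eval x = (E.tree i).eval y :=
    DTree.eval_eq_of_mem_box (fun js hjs => hcov js.1 ▸ ⟨i, hjs⟩) hx hy
  simp only [Ensemble.F, Ensemble.score, heval]

theorem update_mem_box {z : Cell n} {x : Fin p → ℝ} (hx : x ∈ Box n h z) {j : Fin p} {v : ℝ}
    (hlo : ∀ k : Fin (n j), (k : ℕ) < z j → h j k < v)
    (hhi : ∀ k : Fin (n j), (z j : ℕ) ≤ k → v < h j k) : update x j v ∈ Box n h z := by
  intro i
  rcases eq_or_ne i j with rfl | hi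
  · simpa using ⟨hlo, hhi⟩
  · simpa [hi] using hx i

theorem encl_iff {zL zR z : Cell n} : Encl zL zR z ↔ zL ≤ z ∧ z ≤ zR :=
  forall_and

theorem mem_regionSet {zL zR : Cell n} {x : Fin p → ℝ} :
    x ∈ RegionSet n h zL zR ↔ ∃ z, (zL ≤ z ∧ z ≤ zR) ∧ x ∈ Box n h z := by
  simp [RegionSet, encl_iff]

theorem regionSet_mono {zL zR zL' zR' : Cell n} (hL : zL ≤ zL') (hR : zR' ≤ zR) :
    RegionSet n h zL' zR' ⊆ RegionSet n h zL zR := by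
  intro x hx
  obtain ⟨z, hz, hxz⟩ := mem_regionSet.1 hx
  exact mem_regionSet.2 ⟨z, ⟨hL.trans hz.1, hz.2.trans hR⟩, hxz⟩

@[simp]
theorem val_splitR_self (zR : Cell n) (j : Fin p) (l : Fin (n j)) :
    (splitR zR j l j : ℕ) = l := by
  simp [splitR]

@[simp]
theorem val_splitL_self (zL : Cell n) (j : Fin p) (l : Fin (n j)) :
    (splitL zL j l j : ℕ) = l + 1 := by
  simp [splitL]

end Cells

section Faithful

variable {p : ℕ} {n : Fin p → ℕ} {h : ∀ j, Fin (n j) → ℝ} {E : Ensemble p}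

theorem Faithful.mono {T : DTree p} {S S' : Set (Fin p → ℝ)} (hT : Faithful T E S)
    (hS : S' ⊆ S) : Faithful T E S' :=
  fun x hx => hT x (hS hx)

theorem exists_faithful_leaf_iff {S : Set (Fin p → ℝ)} :
    (∃ c, Faithful (.leaf c) E S) ↔ ∀ x ∈ S, ∀ y ∈ S, E.F x = E.F y := by
  refine ⟨fun ⟨c, hc⟩ x hx y hy => (hc x hx).symm.trans (hc y hy), fun hS => ?_⟩
  rcases S.eq_empty_or_nonempty with rfl | ⟨x₀, hx₀⟩
  · exact ⟨0, fun x hx => hx.elim⟩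
  · exact ⟨E.F x₀, fun x hx => hS x₀ hx₀ x hx⟩

theorem forall_sameClass_iff {zL zR : Cell n} :
    (∀ z z' : Cell n, Encl zL zR z → Encl zL zR z' → SameClass E n h z z') ↔
      ∀ x ∈ RegionSet n h zL zR, ∀ y ∈ RegionSet n h zL zR, E.F x = E.F y := by
  simp only [mem_regionSet, ← encl_iff]
  constructor
  · rintro hsame x ⟨z, hz, hxz⟩ y ⟨z', hz', hyz'⟩
    exact hsame z z' hz hz' x hxz y hyz'
  · exact fun hF z z' hz hz' x hxz y hyz' => hF x ⟨z, hz, hxz⟩ y ⟨z', hz', hyz'⟩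

theorem faithful_node {zL zR : Cell n} {j : Fin p} {l : Fin (n j)} {T₁ T₂ : DTree p}
    (h₁ : Faithful T₁ E (RegionSet n h zL (splitR zR j l)))
    (h₂ : Faithful T₂ E (RegionSet n h (splitL zL j l) zR)) :
    Faithful (.node j (h j l) T₁ T₂) E (RegionSet n h zL zR) := by
  intro x hx
  obtain ⟨z, ⟨hLz, hzR⟩, hxz⟩ := mem_regionSet.1 hx
  simp only [DTree.eval]
  split_ifs with hxl
  · have hzl : z j ≤ l.castSucc :=
      Fin.le_def.2 <| not_lt.1 fun hlz => ((hxz j).1 l hlz).not_ge hxl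
    exact h₁ x <| mem_regionSet.2 ⟨z, ⟨hLz, le_update_iff.2 ⟨hzl, fun i _ => hzR i⟩⟩, hxz⟩
  · have hlz : l.succ ≤ z j := Fin.le_def.2 <| not_lt.1 fun hzl =>
      hxl ((hxz j).2 l (Nat.lt_succ_iff.1 hzl)).le
    exact h₂ x <| mem_regionSet.2 ⟨z, ⟨update_le_iff.2 ⟨hlz, fun i _ => hLz i⟩, hzR⟩, hxz⟩

theorem exists_faithful (hcov : ∀ j, E.H j = Set.range (h j)) (zL zR : Cell n) :
    ∃ T : DTree p, Faithful T E (RegionSet n h zL zR) := by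
  by_cases hlt : zL < zR
  · obtain ⟨j, hj⟩ := (Pi.lt_def.1 hlt).2
    let l : Fin (n j) := ⟨zL j, by omega⟩
    have hdec₁ : (Finset.Icc zL (splitR zR j l)).card < (Finset.Icc zL zR).card :=
      Finset.card_lt_card <| Finset.Icc_ssubset_Icc_right hlt.le le_rfl (update_lt_self_iff.2 hj)
    have hdec₂ : (Finset.Icc (splitL zL j l) zR).card < (Finset.Icc zL zR).card :=
      Finset.card_lt_card <| Finset.Icc_ssubset_Icc_left hlt.le
        (lt_update_self_iff.2 (Fin.lt_def.2 (Nat.lt_succ_self _))) le_rfl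
    obtain ⟨T₁, h₁⟩ := exists_faithful hcov zL (splitR zR j l)
    obtain ⟨T₂, h₂⟩ := exists_faithful hcov (splitL zL j l) zR
    exact ⟨_, faithful_node h₁ h₂⟩
  · obtain ⟨c, hc⟩ := exists_faithful_leaf_iff.2 fun x hx y hy => by
      obtain ⟨z, hz, hxz⟩ := mem_regionSet.1 hx
      obtain ⟨z', hz', hyz'⟩ := mem_regionSet.1 hy
      have hL : zL = zR := eq_of_le_of_not_lt (hz.1.trans hz.2) hlt
      obtain rfl : z = z' := (hz.2.trans (hL ▸ hz'.1)).antisymm (hz'.2.trans (hL ▸ hz.1))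
      exact Ensemble.F_eq_of_mem_box hcov hxz hyz'
    exact ⟨_, hc⟩
termination_by (Finset.Icc zL zR).card

theorem phi_le_depth {zL zR : Cell n} {T : DTree p}
    (hT : Faithful T E (RegionSet n h zL zR)) :
    Phi E n h zL zR ≤ T.depth :=
  Nat.sInf_le ⟨T, hT, rfl⟩

theorem exists_faithful_depth_eq_phi (hcov : ∀ j, E.H j = Set.range (h j)) (zL zR : Cell n) :
    ∃ T : DTree p, Faithful T E (RegionSet n h zL zR) ∧ T.depth = Phi E n h zL zR := by
  obtain ⟨T, hT⟩ := exists_faithful hcov zL zR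
  exact Nat.sInf_mem
    (s := {d | ∃ T : DTree p, Faithful T E (RegionSet n h zL zR) ∧ T.depth = d}) ⟨_, T, hT, rfl⟩

end Faithful

theorem exists_gt_forall_lt {ι : Type*} [Finite ι] {f : ι → ℝ} {t : ℝ}
    (hf : ∀ i, t < f i) :
    ∃ v, t < v ∧ ∀ i, v < f i := by
  have hlt : ∀ᶠ v in 𝓝[>] t, ∀ i, v < f i :=
    nhdsWithin_le_nhds (Filter.eventually_all.2 fun i => eventually_lt_nhds (hf i))
  obtain ⟨v, hv, htv⟩ := (hlt.and self_mem_nhdsWithin).exists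
  exact ⟨v, htv, hv⟩

theorem StrictMono.exists_level_or {m : ℕ} {g : Fin m → ℝ} (hg : StrictMono g) (t : ℝ)
    (a b : ℕ) :
    (∃ l : Fin m, a ≤ l ∧ (l : ℕ) < b ∧ (∀ k, k < l → g k < t) ∧ ∀ k, l < k → t < g k) ∨
      (∀ k : Fin m, (k : ℕ) < b → g k < t) ∨
      ∀ k : Fin m, a ≤ (k : ℕ) → t < g k := by
  by_cases hS : ∃ k, t ≤ g k
  · obtain ⟨β, hβ, hmin⟩ := WellFounded.has_min wellFounded_lt {k | t ≤ g k} hS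
    have hbelow (k : Fin m) (hk : k < β) : g k < t := not_le.1 fun htk => hmin k htk hk
    have habove (k : Fin m) (hk : β < k) : t < g k := lt_of_le_of_lt hβ (hg hk)
    rcases lt_or_ge (β : ℕ) a with hβa | haβ
    · exact .inr <| .inr fun k hk => habove k (Fin.lt_def.2 (by omega))
    rcases lt_or_ge (β : ℕ) b with hβb | hbβ
    · exact .inl ⟨β, haβ, hβb, hbelow, habove⟩
    · exact .inr <| .inl fun k hk => hbelow k (Fin.lt_def.2 (by omega))
  · push Not at hS
    exact .inr <| .inl fun k _ => hS k

section Lower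

variable {p : ℕ} {n : Fin p → ℕ} {h : ∀ j, Fin (n j) → ℝ} {E : Ensemble p}

theorem exists_faithful_of_node_left (hcov : ∀ j, E.H j = Set.range (h j)) {zL zR : Cell n}
    {j : Fin p} {t : ℝ} {L R : DTree p}
    (hT : Faithful (.node j t L R) E (RegionSet n h zL zR))
    (ht : ∀ k : Fin (n j), (k : ℕ) < zR j → h j k < t) :
    ∃ L' : DTree p, L'.depth ≤ L.depth ∧ Faithful L' E (RegionSet n h zL zR) := by
  refine ⟨L.clampMin j t, L.depth_clampMin_le j t, fun x hx => ?_⟩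
  obtain ⟨z, hz, hxz⟩ := mem_regionSet.1 hx
  set y := update x j (min (x j) t)
  have hyz : y ∈ Box n h z := update_mem_box hxz
    (fun k hk => lt_min ((hxz j).1 k hk) (ht k (hk.trans_le (hz.2 j))))
    (fun k hk => (min_le_left _ _).trans_lt ((hxz j).2 k hk))
  calc (L.clampMin j t).eval x = L.eval y := L.eval_clampMin j t x
    _ = (DTree.node j t L R).eval y := by simp [DTree.eval, y]
    _ = E.F y := hT y (mem_regionSet.2 ⟨z, hz, hyz⟩)
    _ = E.F x := Ensemble.F_eq_of_mem_box hcov hyz hxz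

theorem exists_faithful_of_node_right (hcov : ∀ j, E.H j = Set.range (h j)) {zL zR : Cell n}
    {j : Fin p} {t : ℝ} {L R : DTree p}
    (hT : Faithful (.node j t L R) E (RegionSet n h zL zR))
    (ht : ∀ k : Fin (n j), (zL j : ℕ) ≤ k → t < h j k) :
    ∃ R' : DTree p, R'.depth ≤ R.depth ∧ Faithful R' E (RegionSet n h zL zR) := by
  -- Points cannot be moved to `t` itself, which goes to `L`; any `v > t` below the region's
  -- upper thresholds does.
  obtain ⟨v, htv, hv⟩ := exists_gt_forall_lt
    (f := fun k : {k : Fin (n j) // (zL j : ℕ) ≤ k} => h j k) fun k => ht k k.2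
  refine ⟨R.clampMax j v, R.depth_clampMax_le j v, fun x hx => ?_⟩
  obtain ⟨z, hz, hxz⟩ := mem_regionSet.1 hx
  set y := update x j (max (x j) v)
  have hyz : y ∈ Box n h z := update_mem_box hxz
    (fun k hk => ((hxz j).1 k hk).trans_le (le_max_left _ _))
    (fun k hk => max_lt ((hxz j).2 k hk) (hv ⟨k, (Fin.le_def.1 (hz.1 j)).trans hk⟩))
  calc (R.clampMax j v).eval x = R.eval y := R.eval_clampMax j v x
    _ = (DTree.node j t L R).eval y := by
      simp [DTree.eval, y, (htv.trans_le (le_max_right (x j) v)).not_ge]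
    _ = E.F y := hT y (mem_regionSet.2 ⟨z, hz, hyz⟩)
    _ = E.F x := Ensemble.F_eq_of_mem_box hcov hyz hxz

def splitDepths (E : Ensemble p) (n : Fin p → ℕ) (h : ∀ j, Fin (n j) → ℝ)
    (zL zR : Cell n) : Set ℕ :=
  {v : ℕ | ∃ (j : Fin p) (l : Fin (n j)), (zL j : ℕ) ≤ (l : ℕ) ∧
    (l : ℕ) < (zR j : ℕ) ∧
    v = 1 + max (Phi E n h zL (splitR zR j l)) (Phi E n h (splitL zL j l) zR)}

theorem phi_le_of_mem_splitDepths (hcov : ∀ j, E.H j = Set.range (h j)) {zL zR : Cell n}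
    {v : ℕ} (hv : v ∈ splitDepths E n h zL zR) : Phi E n h zL zR ≤ v := by
  obtain ⟨j, l, -, -, rfl⟩ := hv
  obtain ⟨T₁, h₁, hd₁⟩ := exists_faithful_depth_eq_phi hcov zL (splitR zR j l)
  obtain ⟨T₂, h₂, hd₂⟩ := exists_faithful_depth_eq_phi hcov (splitL zL j l) zR
  simpa [DTree.depth, hd₁, hd₂] using phi_le_depth (faithful_node h₁ h₂)

theorem exists_split_or_shallower (hmono : ∀ j, StrictMono (h j))
    (hcov : ∀ j, E.H j = Set.range (h j)) {zL zR : Cell n} {j : Fin p} {t : ℝ} {L R : DTree p}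
    (hT : Faithful (.node j t L R) E (RegionSet n h zL zR)) :
    (∃ v ∈ splitDepths E n h zL zR, v ≤ (DTree.node j t L R).depth) ∨
      ∃ T : DTree p, T.depth < (DTree.node j t L R).depth ∧
        Faithful T E (RegionSet n h zL zR) := by
  simp only [DTree.depth]
  rcases (hmono j).exists_level_or t (zL j) (zR j) with
    ⟨l, hal, hlb, hbelow, habove⟩ | hbelow | habove
  · have hRl : splitR zR j l ≤ zR := update_le_self_iff.2 (Fin.le_def.2 hlb.le)
    have hLl : zL ≤ splitL zL j l := le_update_self_iff.2 (Fin.le_def.2 (by simp; omega))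
    obtain ⟨L', hL'd, hL'⟩ := exists_faithful_of_node_left hcov
      (hT.mono (regionSet_mono le_rfl hRl)) fun k hk => hbelow k (by simpa using hk)
    obtain ⟨R', hR'd, hR'⟩ := exists_faithful_of_node_right hcov
      (hT.mono (regionSet_mono hLl le_rfl)) fun k hk =>
        habove k (Fin.lt_def.2 (by simpa using hk))
    have hΦL := phi_le_depth hL'
    have hΦR := phi_le_depth hR'
    exact .inl ⟨_, ⟨j, l, hal, hlb, rfl⟩, by omega⟩
  · obtain ⟨L', hL'd, hL'⟩ := exists_faithful_of_node_left hcov hT hbelow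
    exact .inr ⟨L', by omega, hL'⟩
  · obtain ⟨R', hR'd, hR'⟩ := exists_faithful_of_node_right hcov hT habove
    exact .inr ⟨R', by omega, hR'⟩

theorem exists_mem_splitDepths_le_depth (hmono : ∀ j, StrictMono (h j))
    (hcov : ∀ j, E.H j = Set.range (h j)) {zL zR : Cell n}
    (hF : ¬ ∀ x ∈ RegionSet n h zL zR, ∀ y ∈ RegionSet n h zL zR, E.F x = E.F y)
    (T : DTree p) (hT : Faithful T E (RegionSet n h zL zR)) :
    ∃ v ∈ splitDepths E n h zL zR, v ≤ T.depth := by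
  induction hd : T.depth using Nat.strong_induction_on generalizing T with
  | _ d ih =>
    cases T with
    | leaf c => exact absurd (exists_faithful_leaf_iff.1 ⟨c, hT⟩) hF
    | node j t L R =>
      rcases exists_split_or_shallower hmono hcov hT with hv | ⟨T', hlt, hT'⟩
      · exact hd ▸ hv
      · obtain ⟨v, hv, hvT'⟩ := ih _ (hd ▸ hlt) T' hT' rfl
        exact ⟨v, hv, by omega⟩

end Lower

theorem phi_recursion_general {p : ℕ} (E : Ensemble p) (n : Fin p → ℕ) (h : ∀ j, Fin (n j) → ℝ)
    (hmono : ∀ j, StrictMono (h j)) (hcov : ∀ j, E.H j = Set.range (h j))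
    (zL zR : Cell n) :
    ((∀ z z' : Cell n, Encl zL zR z → Encl zL zR z' → SameClass E n h z z') →
      Phi E n h zL zR = 0) ∧
    (¬ (∀ z z' : Cell n, Encl zL zR z → Encl zL zR z' → SameClass E n h z z') →
      Phi E n h zL zR =
        sInf {v : ℕ | ∃ (j : Fin p) (l : Fin (n j)), (zL j : ℕ) ≤ (l : ℕ) ∧
          (l : ℕ) < (zR j : ℕ) ∧
          v = 1 + max (Phi E n h zL (splitR zR j l)) (Phi E n h (splitL zL j l) zR)}) := by
  rw [forall_sameClass_iff]
  refine ⟨fun hF => ?_, fun hF => ?_⟩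
  · obtain ⟨c, hc⟩ := exists_faithful_leaf_iff.2 hF
    exact Nat.le_zero.1 (phi_le_depth hc)
  · change _ = sInf (splitDepths E n h zL zR)
    obtain ⟨T, hT, hTd⟩ := exists_faithful_depth_eq_phi hcov zL zR
    obtain ⟨v, hv, hvT⟩ := exists_mem_splitDepths_le_depth hmono hcov hF T hT
    exact le_antisymm (le_csInf ⟨v, hv⟩ fun _ => phi_le_of_mem_splitDepths hcov)
      ((Nat.sInf_le hv).trans (hTd ▸ hvT))

/-- **DP recursion.** `Φ(zL, zR) = 0` if all cells enclosed in the region have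
the same weighted majority class; otherwise `Φ(zL, zR)` equals the minimum, over features `j`
and levels `l` with `zL j ≤ l < zR j`, of `1 + max{Φ(zL, zR_{jl}), Φ(zL_{jl}, zR)}`. -/
theorem phi_recursion {p : ℕ} (E : Ensemble p) (n : Fin p → ℕ) (h : ∀ j, Fin (n j) → ℝ)
    (hmono : ∀ j, StrictMono (h j)) (hcov : ∀ j, E.H j = Set.range (h j))
    (zL zR : Cell n) (hreg : ∀ j, (zL j : ℕ) ≤ (zR j : ℕ)) :
    ((∀ z z' : Cell n, Encl zL zR z → Encl zL zR z' → SameClass E n h z z') →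
      Phi E n h zL zR = 0) ∧
    (¬ (∀ z z' : Cell n, Encl zL zR z → Encl zL zR z' → SameClass E n h z z') →
      Phi E n h zL zR =
        sInf {v : ℕ | ∃ (j : Fin p) (l : Fin (n j)), (zL j : ℕ) ≤ (l : ℕ) ∧
          (l : ℕ) < (zR j : ℕ) ∧
          v = 1 + max (Phi E n h zL (splitR zR j l)) (Phi E n h (splitL zL j l) zR)}) :=
  phi_recursion_general E n h hmono hcov zL zR
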